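/- n-comparability is an equivalence relation on the set of submodules of M: it is reflexive and symmetric, and if N₁ is n-comparable with N₂ and N₂ is n-comparable with N₃, then N₁ is n-comparable with N₃. -/

import Mathlib

/-- The Krull dimension of the support of a module, with `⊥` (i.e. `-∞`)
for the zero module. -/
noncomputable def dimSupp (R : Type*) [CommRing R] (P : Type*) [AddCommGroup P]
    [Module R P] : WithBot (WithTop ℕ) :=
  Order.krullDim (Module.support R P)

/-- Two submodules `N₁, N₂` of `M` are `n`-comparable if the supports of both
`N₁/(N₁ ⊓ N₂)` and `N₂/(N₁ ⊓ N₂)` have Krull dimension `< n`. -/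
def NComparable {R : Type*} [CommRing R] {M : Type*} [AddCommGroup M] [Module R M]
    (n : ℕ) (N₁ N₂ : Submodule R M) : Prop :=
  dimSupp R (N₁ ⧸ ((N₁ ⊓ N₂).comap N₁.subtype)) < (n : WithBot (WithTop ℕ)) ∧
  dimSupp R (N₂ ⧸ ((N₁ ⊓ N₂).comap N₂.subtype)) < (n : WithBot (WithTop ℕ))

/-!
Write `N₁/N₂` for `N₁ ⧸ N₂.comap N₁.subtype ≅ N₁/(N₁ ∩ N₂)`. A prime `p` lies outside the
support of `N₁/N₂` iff every `x ∈ N₁` is moved into `N₂` by some `r ∉ p`; composing such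
scalars gives `Supp(N₁/N₃) ⊆ Supp(N₁/N₂) ∪ Supp(N₂/N₃)`. Supports are closed under
specialization, and a chain of primes in a union of two such sets lies entirely in the one
containing its smallest member, so `dim Supp(N₁/N₃) ≤ max (dim Supp(N₁/N₂)) (dim Supp(N₂/N₃))`.
-/

section KrullDim

variable {α : Type*} [Preorder α]

theorem Order.krullDim_le_of_subset {s t : Set α} (h : s ⊆ t) :
    Order.krullDim s ≤ Order.krullDim t :=
  Order.krullDim_le_of_strictMono (Set.inclusion h) fun _ _ => id

theorem LTSeries.length_le_krullDim_of_head_mem {s u : Set α} (hs : IsUpperSet s)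
    (p : LTSeries u) (hp : (p.head : α) ∈ s) : (p.length : WithBot ℕ∞) ≤ Order.krullDim s :=
  Order.LTSeries.length_le_krullDim
    ⟨p.length, fun i => ⟨p i, hs (p.monotone (Fin.zero_le i)) hp⟩, fun i => p.step i⟩

theorem Order.krullDim_union_le_of_isUpperSet {s t : Set α} (hs : IsUpperSet s)
    (ht : IsUpperSet t) :
    Order.krullDim ↥(s ∪ t) ≤ max (Order.krullDim s) (Order.krullDim t) :=
  iSup_le fun p => p.head.2.elim
    (fun h => le_max_of_le_left (p.length_le_krullDim_of_head_mem hs h))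
    (fun h => le_max_of_le_right (p.length_le_krullDim_of_head_mem ht h))

end KrullDim

theorem Module.isUpperSet_support (R M : Type*) [CommRing R] [AddCommGroup M] [Module R M] :
    IsUpperSet (Module.support R M) :=
  fun _ _ h hp => Module.mem_support_mono h hp

namespace Submodule

variable {R M : Type*} [CommRing R] [AddCommGroup M] [Module R M]

theorem comap_subtype_inf_left (N₁ N₂ : Submodule R M) :
    (N₁ ⊓ N₂).comap N₁.subtype = N₂.comap N₁.subtype := by
  rw [comap_inf, comap_subtype_self, top_inf_eq]

theorem comap_subtype_inf_right (N₁ N₂ : Submodule R M) :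
    (N₁ ⊓ N₂).comap N₂.subtype = N₁.comap N₂.subtype := by
  rw [inf_comm, comap_subtype_inf_left]

theorem notMem_support_quotient_comap_subtype_iff {N₁ N₂ : Submodule R M}
    {p : PrimeSpectrum R} :
    p ∉ Module.support R (N₁ ⧸ N₂.comap N₁.subtype) ↔
      ∀ x ∈ N₁, ∃ r ∉ p.asIdeal, r • x ∈ N₂ := by
  simp [Module.notMem_support_iff', (Quotient.mk_surjective _).forall, ← Quotient.mk_smul]

theorem support_quotient_comap_subtype_subset (N₁ N₂ N₃ : Submodule R M) :
    Module.support R (N₁ ⧸ N₃.comap N₁.subtype) ⊆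
      Module.support R (N₁ ⧸ N₂.comap N₁.subtype) ∪
        Module.support R (N₂ ⧸ N₃.comap N₂.subtype) := by
  intro p
  contrapose
  simp only [Set.mem_union, not_or, notMem_support_quotient_comap_subtype_iff]
  rintro ⟨h₁₂, h₂₃⟩ x hx
  obtain ⟨r, hr, hrx⟩ := h₁₂ x hx
  obtain ⟨s, hs, hsrx⟩ := h₂₃ _ hrx
  exact ⟨s * r, p.asIdeal.primeCompl.mul_mem hs hr, by rwa [mul_smul]⟩

end Submodule

section DimSupp

variable {R M : Type*} [CommRing R] [AddCommGroup M] [Module R M]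

theorem dimSupp_eq_bot (P : Type*) [AddCommGroup P] [Module R P] [Subsingleton P] :
    dimSupp R P = ⊥ := by
  rw [dimSupp, Module.support_eq_empty]
  exact Order.krullDim_eq_bot

theorem dimSupp_quotient_comap_subtype_le (N₁ N₂ N₃ : Submodule R M) :
    dimSupp R (N₁ ⧸ N₃.comap N₁.subtype) ≤
      max (dimSupp R (N₁ ⧸ N₂.comap N₁.subtype)) (dimSupp R (N₂ ⧸ N₃.comap N₂.subtype)) :=
  (Order.krullDim_le_of_subset (Submodule.support_quotient_comap_subtype_subset N₁ N₂ N₃)).trans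
    (Order.krullDim_union_le_of_isUpperSet (Module.isUpperSet_support _ _)
      (Module.isUpperSet_support _ _))

theorem nComparable_iff {n : ℕ} {N₁ N₂ : Submodule R M} :
    NComparable n N₁ N₂ ↔
      dimSupp R (N₁ ⧸ N₂.comap N₁.subtype) < n ∧ dimSupp R (N₂ ⧸ N₁.comap N₂.subtype) < n := by
  rw [NComparable, Submodule.comap_subtype_inf_left, Submodule.comap_subtype_inf_right]

theorem NComparable.refl (n : ℕ) (N : Submodule R M) : NComparable n N N := by
  have : Subsingleton (N ⧸ N.comap N.subtype) := by
    rw [Submodule.Quotient.subsingleton_iff, Submodule.comap_subtype_self]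
  rw [nComparable_iff, dimSupp_eq_bot, and_self]
  exact WithBot.bot_lt_coe _

theorem NComparable.symm {n : ℕ} {N₁ N₂ : Submodule R M} (h : NComparable n N₁ N₂) :
    NComparable n N₂ N₁ :=
  nComparable_iff.2 (nComparable_iff.1 h).symm

theorem NComparable.trans {n : ℕ} {N₁ N₂ N₃ : Submodule R M} (h₁₂ : NComparable n N₁ N₂)
    (h₂₃ : NComparable n N₂ N₃) : NComparable n N₁ N₃ := by
  rw [nComparable_iff] at *
  exact ⟨(dimSupp_quotient_comap_subtype_le N₁ N₂ N₃).trans_lt (max_lt h₁₂.1 h₂₃.1),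
    (dimSupp_quotient_comap_subtype_le N₃ N₂ N₁).trans_lt (max_lt h₂₃.2 h₁₂.2)⟩

end DimSupp

/-- `n`-comparability is an equivalence relation on the set of submodules of `M`. -/
theorem nComparable_equivalence {R : Type*} [CommRing R] {M : Type*} [AddCommGroup M]
    [Module R M] (n : ℕ) :
    Equivalence (NComparable (R := R) (M := M) n) :=
  ⟨NComparable.refl n, NComparable.symm, NComparable.trans⟩
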